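/- Suppose real numbers μ, a_1, …, a_14 are such that the 8 × 8 symmetric matrix G(μ, a_1, …, a_14) has rank at most 3, 0.6 ≤ μ ≤ 0.64759, and |a_j| < μ for all 1 ≤ j ≤ 14. Then a_4 = (−a_1 − μ − a_1 μ − 2 a_3 μ − μ²)/(2μ) and μ ≥ (1 + √17)/8. -/

import Mathlib

/-!
Only the principal `6 × 6` block of `G` on the indices `1, 2, 3, 5, 6, 7` is needed. Since `μ < 1`
and `|a₆| < 1`, the vanishing of its `4 × 4` minors forces in turn `(1 + μ) a₆ = 1 + μ - 4μ²`,
`a₉ = -a₈`, the value of `a₈²`, the linear relation that gives `a₄`, a quadratic equation for `a₁`,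
and an identity for `(μ + a₃)(μ + a₄)`. As `a₃, a₄ > -μ`, that identity and the relation for `a₄`
give `(1 + μ) a₁ < 1 + μ - 4μ²`, while `a₁ > -μ`. If `4μ² - μ - 1 < 0`, the quadratic for
`(1 + μ) a₁` is negative at both ends of this interval (at the upper end by a quintic inequality in
`μ`), so by convexity it has no root inside.
-/

/-- The `8 × 8` symmetric matrix `G(μ, a₁, …, a₁₄)` from the paper. -/
def packingGram (μ a1 a2 a3 a4 a5 a6 a7 a8 a9 a10 a11 a12 a13 a14 : ℝ) :
    Matrix (Fin 8) (Fin 8) ℝ :=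
  !![1,  a1,  μ,  a2,  a3, -μ,  a4, -μ;
     a1, 1,  -μ,  a5, -μ,  a6, -μ,  a7;
     μ, -μ,   1,   μ,  a8, -μ,  a9, a10;
     a2, a5,  μ,   1, a11, a12,  μ,   μ;
     a3, -μ, a8, a11,   1,   μ,  μ,  -μ;
     -μ, a6, -μ, a12,   μ,   1,  μ, a13;
     a4, -μ, a9,   μ,   μ,   μ,  1, a14;
     -μ, a7, a10,  μ,  -μ, a13, a14,  1]


open Matrix

theorem Matrix.det_submatrix_eq_zero_of_rank_lt {m n ι R : Type*} [Fintype n] [Fintype ι]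
    [DecidableEq ι] [CommRing R] [IsDomain R] (A : Matrix m n R) (r : ι → m) (c : ι → n)
    (h : A.rank < Fintype.card ι) : (A.submatrix r c).det = 0 := by
  by_contra hdet
  have := A.rank_submatrix_le r c
  rw [rank_of_det_ne_zero hdet] at this
  omega

theorem Matrix.det_fin_four {R : Type*} [CommRing R] (A : Matrix (Fin 4) (Fin 4) R) :
    A.det = A 0 0 * !![A 1 1, A 1 2, A 1 3; A 2 1, A 2 2, A 2 3; A 3 1, A 3 2, A 3 3].det
      - A 0 1 * !![A 1 0, A 1 2, A 1 3; A 2 0, A 2 2, A 2 3; A 3 0, A 3 2, A 3 3].det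
      + A 0 2 * !![A 1 0, A 1 1, A 1 3; A 2 0, A 2 1, A 2 3; A 3 0, A 3 1, A 3 3].det
      - A 0 3 * !![A 1 0, A 1 1, A 1 2; A 2 0, A 2 1, A 2 2; A 3 0, A 3 1, A 3 2].det := by
  rw [det_succ_row_zero, Fin.sum_univ_four]
  simp +decide [det_fin_three, Fin.succAbove]
  ring

theorem quadratic_neg_of_mem_Ioo {a b c u v x : ℝ} (ha : 0 < a) (hu : a * u ^ 2 + b * u + c ≤ 0)
    (hv : a * v ^ 2 + b * v + c ≤ 0) (hx : x ∈ Set.Ioo u v) : a * x ^ 2 + b * x + c < 0 := by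
  obtain ⟨hux, hxv⟩ := hx
  have hchord : (v - u) * (a * x ^ 2 + b * x + c) = (v - x) * (a * u ^ 2 + b * u + c)
      + (x - u) * (a * v ^ 2 + b * v + c) + a * (x - u) * (x - v) * (v - u) := by ring
  have hgap : a * (x - u) * (x - v) * (v - u) < 0 :=
    mul_neg_of_neg_of_pos (mul_neg_of_pos_of_neg (by positivity) (by linarith)) (by linarith)
  have hsum : (v - u) * (a * x ^ 2 + b * x + c) < 0 := by
    rw [hchord]
    nlinarith [mul_nonpos_of_nonneg_of_nonpos (by linarith : 0 ≤ v - x) hu,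
      mul_nonpos_of_nonneg_of_nonpos (by linarith : 0 ≤ x - u) hv]
  exact neg_of_mul_neg_right hsum (by linarith)

theorem one_add_sqrt_seventeen_div_eight_le {μ : ℝ} (hμ : 0 ≤ μ) (h : 0 ≤ 4 * μ ^ 2 - μ - 1) :
    (1 + √17) / 8 ≤ μ := by
  have : √17 ≤ 8 * μ - 1 := Real.sqrt_le_iff.mpr ⟨by nlinarith, by nlinarith⟩
  linarith

theorem quintic_neg_of_mem_Icc {μ : ℝ} (hμ : μ ∈ Set.Icc (3 / 5) (13 / 20)) :
    1 + 5 * μ - 6 * μ ^ 2 - 38 * μ ^ 3 + 5 * μ ^ 4 + 65 * μ ^ 5 < 0 := by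
  obtain ⟨h1, h2⟩ := hμ
  have ht : 0 ≤ μ - 3 / 5 := by linarith
  have hs : 0 ≤ 13 / 20 - μ := by linarith
  nlinarith [mul_nonneg ht hs, mul_nonneg (mul_nonneg ht ht) hs,
    mul_nonneg (pow_nonneg ht 3) hs, mul_nonneg (pow_nonneg ht 4) hs]

def gramBlock (μ a1 a3 a4 a6 a8 a9 : ℝ) : Matrix (Fin 6) (Fin 6) ℝ :=
  !![1, a1, μ, a3, -μ, a4;
     a1, 1, -μ, -μ, a6, -μ;
     μ, -μ, 1, a8, -μ, a9;
     a3, -μ, a8, 1, μ, μ;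
     -μ, a6, -μ, μ, 1, μ;
     a4, -μ, a9, μ, μ, 1]

theorem rank_gramBlock_le (μ a1 a2 a3 a4 a5 a6 a7 a8 a9 a10 a11 a12 a13 a14 : ℝ) :
    (gramBlock μ a1 a3 a4 a6 a8 a9).rank
      ≤ (packingGram μ a1 a2 a3 a4 a5 a6 a7 a8 a9 a10 a11 a12 a13 a14).rank := by
  have hsub : (packingGram μ a1 a2 a3 a4 a5 a6 a7 a8 a9 a10 a11 a12 a13 a14).submatrix
      ![0, 1, 2, 4, 5, 6] ![0, 1, 2, 4, 5, 6] = gramBlock μ a1 a3 a4 a6 a8 a9 := by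
    ext i j; fin_cases i <;> fin_cases j <;> rfl
  exact hsub ▸ rank_submatrix_le _ _ _

namespace gramBlock

variable {μ a1 a3 a4 a6 a8 a9 : ℝ}

theorem det_submatrix_eq_zero (h : (gramBlock μ a1 a3 a4 a6 a8 a9).rank ≤ 3)
    (r c : Fin 4 → Fin 6) :
    ((gramBlock μ a1 a3 a4 a6 a8 a9).submatrix r c).det = 0 :=
  det_submatrix_eq_zero_of_rank_lt _ r c (by simp; omega)

theorem a6_relation (h : (gramBlock μ a1 a3 a4 a6 a8 a9).rank ≤ 3) (hμ : μ ≠ 1) (ha6 : a6 ≠ -1) :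
    (μ + 1) * a6 + (4 * μ ^ 2 - μ - 1) = 0 := by
  have hM := det_submatrix_eq_zero h ![1, 3, 4, 5] ![1, 3, 4, 5]
  simp only [gramBlock, det_fin_four, det_fin_three, submatrix_apply, of_apply, cons_val,
    cons_val_zero, cons_val_one] at hM
  have : (μ - 1) * (a6 + 1) * ((μ + 1) * a6 + (4 * μ ^ 2 - μ - 1)) = 0 := by
    linear_combination hM
  simpa [sub_eq_zero, hμ, add_eq_zero_iff_eq_neg, ha6] using this

theorem a9_eq_neg_a8 (h : (gramBlock μ a1 a3 a4 a6 a8 a9).rank ≤ 3) (hμ : μ ≠ 1)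
    (ha6 : a6 ^ 2 ≠ 1) : a9 = -a8 := by
  have hM := det_submatrix_eq_zero h ![1, 2, 3, 4] ![1, 3, 4, 5]
  have hM' := det_submatrix_eq_zero h ![1, 2, 4, 5] ![1, 3, 4, 5]
  simp only [gramBlock, det_fin_four, det_fin_three, submatrix_apply, of_apply, cons_val,
    cons_val_zero, cons_val_one] at hM hM'
  have : (a8 + a9) * ((1 - μ) * (1 - a6 ^ 2)) = 0 := by linear_combination hM + hM'
  have hne : (1 - μ) * (1 - a6 ^ 2) ≠ 0 :=
    mul_ne_zero (sub_ne_zero.2 hμ.symm) (sub_ne_zero.2 ha6.symm)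
  linear_combination (mul_eq_zero.1 this).resolve_right hne

theorem a8_relation (h : (gramBlock μ a1 a3 a4 a6 a8 a9).rank ≤ 3) (hμ0 : μ ≠ 0) (hμ : μ ≠ 1)
    (h6 : (μ + 1) * a6 + (4 * μ ^ 2 - μ - 1) = 0) :
    2 * (2 * μ + 1) * (1 - a8 ^ 2) = (1 + μ) ^ 3 := by
  have hM := det_submatrix_eq_zero h ![1, 2, 3, 4] ![1, 2, 3, 4]
  simp only [gramBlock, det_fin_four, det_fin_three, submatrix_apply, of_apply, cons_val,
    cons_val_zero, cons_val_one] at hM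
  have : (2 * (2 * μ + 1) * (1 - a8 ^ 2) - (1 + μ) ^ 3) * (4 * μ ^ 2 * (1 - μ)) = 0 := by
    linear_combination (μ + 1) ^ 2 * hM - (a8 ^ 2 - 1) * ((1 + μ) * (1 + a6) - 4 * μ ^ 2) * h6
  have hne : 4 * μ ^ 2 * (1 - μ) ≠ 0 := by
    have := sub_ne_zero.2 hμ.symm
    positivity
  exact sub_eq_zero.1 ((mul_eq_zero.1 this).resolve_right hne)

theorem a4_relation (h : (gramBlock μ a1 a3 a4 a6 a8 a9).rank ≤ 3) (hμ0 : 0 < μ) (hμ : μ ≠ 1)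
    (h6 : (μ + 1) * a6 + (4 * μ ^ 2 - μ - 1) = 0) :
    (1 + μ) * a1 + μ + μ ^ 2 + 2 * μ * (a3 + a4) = 0 := by
  have hM := det_submatrix_eq_zero h ![0, 1, 3, 5] ![1, 3, 4, 5]
  simp only [gramBlock, det_fin_four, det_fin_three, submatrix_apply, of_apply, cons_val,
    cons_val_zero, cons_val_one] at hM
  have : ((1 + μ) * a1 + μ + μ ^ 2 + 2 * μ * (a3 + a4)) * ((1 - μ) ^ 2 * (1 + 2 * μ)) = 0 := by
    linear_combination -(μ + 1) * hM + (μ - 1) * ((μ + 1) * a1 + μ * (a3 + a4)) * h6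
  have hne : (1 - μ) ^ 2 * (1 + 2 * μ) ≠ 0 := by
    have := sub_ne_zero.2 hμ.symm
    positivity
  exact (mul_eq_zero.1 this).resolve_right hne

theorem a1_relation (h : (gramBlock μ a1 a3 a4 a6 a8 a9).rank ≤ 3) (hμ : μ ^ 2 ≠ 1)
    (h6 : (μ + 1) * a6 + (4 * μ ^ 2 - μ - 1) = 0) :
    (1 + μ) ^ 2 * a1 ^ 2 + 2 * μ * (1 - μ) * (1 + 3 * μ) * a1 + μ ^ 2 * (25 * μ ^ 2 - 6 * μ - 7)
      = 0 := by
  have hM := det_submatrix_eq_zero h ![0, 1, 2, 4] ![0, 1, 2, 4]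
  simp only [gramBlock, det_fin_four, det_fin_three, submatrix_apply, of_apply, cons_val,
    cons_val_zero, cons_val_one] at hM
  have : ((1 + μ) ^ 2 * a1 ^ 2 + 2 * μ * (1 - μ) * (1 + 3 * μ) * a1
      + μ ^ 2 * (25 * μ ^ 2 - 6 * μ - 7)) * (μ ^ 2 - 1) = 0 := by
    linear_combination
      (μ + 1) ^ 2 * hM - (μ ^ 2 - 1) * ((μ + 1) * a6 + 2 * μ * a1 + 1 + μ - 6 * μ ^ 2) * h6
  exact (mul_eq_zero.1 this).resolve_right (sub_ne_zero.2 hμ)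

theorem mu_add_a3_mul_mu_add_a4 (h : (gramBlock μ a1 a3 a4 a6 a8 a9).rank ≤ 3) (hμ : μ ≠ 1)
    (h9 : a9 = -a8) (h8 : 2 * (2 * μ + 1) * (1 - a8 ^ 2) = (1 + μ) ^ 3) :
    2 * (1 + 2 * μ) * (1 + μ) * ((μ + a3) * (μ + a4))
      = (1 + μ) ^ 2 * (2 * μ * (a3 + a4) + (3 * μ + 1) * (1 - μ)) := by
  subst h9
  have hM := det_submatrix_eq_zero h ![0, 3, 4, 5] ![2, 3, 4, 5]
  have hM' := det_submatrix_eq_zero h ![0, 2, 3, 4] ![0, 2, 4, 5]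
  simp only [gramBlock, det_fin_four, det_fin_three, submatrix_apply, of_apply, cons_val,
    cons_val_zero, cons_val_one] at hM hM'
  have : (2 * (1 + 2 * μ) * (1 + μ) * ((μ + a3) * (μ + a4))
      - (1 + μ) ^ 2 * (2 * μ * (a3 + a4) + (3 * μ + 1) * (1 - μ))) * (1 - μ) = 0 := by
    linear_combination 2 * μ * hM + 2 * (1 + 2 * μ) * hM' - (1 - μ ^ 2) * h8
  exact sub_eq_zero.1 ((mul_eq_zero.1 this).resolve_right (sub_ne_zero.2 hμ.symm))

end gramBlock

theorem four_mul_sq_sub_self_sub_one_nonneg {μ a1 a3 a4 : ℝ} (hμ : μ ∈ Set.Icc (3 / 5) (13 / 20))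
    (ha1 : -μ < a1) (ha3 : -μ < a3) (ha4 : -μ < a4)
    (hA : (1 + μ) * a1 + μ + μ ^ 2 + 2 * μ * (a3 + a4) = 0)
    (hQ : (1 + μ) ^ 2 * a1 ^ 2 + 2 * μ * (1 - μ) * (1 + 3 * μ) * a1
      + μ ^ 2 * (25 * μ ^ 2 - 6 * μ - 7) = 0)
    (hI : 2 * (1 + 2 * μ) * (1 + μ) * ((μ + a3) * (μ + a4))
      = (1 + μ) ^ 2 * (2 * μ * (a3 + a4) + (3 * μ + 1) * (1 - μ))) :
    0 ≤ 4 * μ ^ 2 - μ - 1 := by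
  have hμ0 : 0 < μ := by linarith [hμ.1]
  by_contra! hc
  have hI_pos : 0 < 2 * μ * (a3 + a4) + (3 * μ + 1) * (1 - μ) := by
    have hprod : 0 < (μ + a3) * (μ + a4) := mul_pos (by linarith) (by linarith)
    have : 0 < (1 + μ) ^ 2 * (2 * μ * (a3 + a4) + (3 * μ + 1) * (1 - μ)) := hI ▸ by positivity
    exact pos_of_mul_pos_right this (by positivity)
  have hq : (1 + μ) * ((1 + μ) * a1) ^ 2 + 2 * μ * (1 - μ) * (1 + 3 * μ) * ((1 + μ) * a1)
      + (1 + μ) * μ ^ 2 * (25 * μ ^ 2 - 6 * μ - 7) = 0 := by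
    linear_combination (1 + μ) * hQ
  refine (quadratic_neg_of_mem_Ioo (u := -μ * (1 + μ)) (v := 1 + μ - 4 * μ ^ 2) (by positivity)
    ?_ ?_ ⟨?_, ?_⟩).ne hq
  · calc _ = 8 * μ ^ 2 * (1 + μ) * (4 * μ ^ 2 - μ - 1) := by ring
      _ ≤ 0 := mul_nonpos_of_nonneg_of_nonpos (by positivity) hc.le
  · calc _ = 1 + 5 * μ - 6 * μ ^ 2 - 38 * μ ^ 3 + 5 * μ ^ 4 + 65 * μ ^ 5 := by ring
      _ ≤ 0 := (quintic_neg_of_mem_Icc hμ).le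
  · have := mul_lt_mul_of_pos_left ha1 (by positivity : (0 : ℝ) < 1 + μ)
    linarith
  · linarith

theorem step3_general
    (μ a1 a2 a3 a4 a5 a6 a7 a8 a9 a10 a11 a12 a13 a14 : ℝ)
    (hrank : (packingGram μ a1 a2 a3 a4 a5 a6 a7 a8 a9 a10 a11 a12 a13 a14).rank ≤ 3)
    (hμ1 : (0.6 : ℝ) ≤ μ) (hμ2 : μ ≤ 0.64759)
    (h1 : |a1| < μ) (h3 : |a3| < μ) (h4 : |a4| < μ)
    (h6 : |a6| < μ) :
    a4 = (-a1 - μ - a1 * μ - 2 * a3 * μ - μ ^ 2) / (2 * μ) ∧ (1 + Real.sqrt 17) / 8 ≤ μ := by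
  have hμ : μ ∈ Set.Icc (3 / 5 : ℝ) (13 / 20) := by norm_num at hμ1 hμ2 ⊢; constructor <;> linarith
  have hμ0 : 0 < μ := by linarith [hμ.1]
  have hμ_lt_one : μ < 1 := by linarith [hμ.2]
  have hB := (rank_gramBlock_le μ a1 a2 a3 a4 a5 a6 a7 a8 a9 a10 a11 a12 a13 a14).trans hrank
  have ha6 : |a6| < 1 := h6.trans hμ_lt_one
  have r6 := gramBlock.a6_relation hB hμ_lt_one.ne (by linarith [(abs_lt.1 ha6).1])
  have r9 := gramBlock.a9_eq_neg_a8 hB hμ_lt_one.ne ((sq_lt_one_iff_abs_lt_one a6).2 ha6).ne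
  have r8 := gramBlock.a8_relation hB hμ0.ne' hμ_lt_one.ne r6
  have r4 := gramBlock.a4_relation hB hμ0 hμ_lt_one.ne r6
  have r1 := gramBlock.a1_relation hB (by nlinarith : μ ^ 2 < 1).ne r6
  have r34 := gramBlock.mu_add_a3_mul_mu_add_a4 hB hμ_lt_one.ne r9 r8
  have key := four_mul_sq_sub_self_sub_one_nonneg hμ (abs_lt.1 h1).1 (abs_lt.1 h3).1
    (abs_lt.1 h4).1 r4 r1 r34
  refine ⟨?_, one_add_sqrt_seventeen_div_eight_le hμ0.le key⟩
  rw [eq_div_iff (by positivity)]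
  linear_combination r4

/-- **Step 3.** Under the rank-3 and coherence conditions on `G`, the coefficient `a₄` is determined and `μ ≥ (1 + √17)/8`. -/
theorem step3
    (μ a1 a2 a3 a4 a5 a6 a7 a8 a9 a10 a11 a12 a13 a14 : ℝ)
    (hrank : (packingGram μ a1 a2 a3 a4 a5 a6 a7 a8 a9 a10 a11 a12 a13 a14).rank ≤ 3)
    (hμ1 : (0.6 : ℝ) ≤ μ) (hμ2 : μ ≤ 0.64759)
    (h1 : |a1| < μ) (h2 : |a2| < μ) (h3 : |a3| < μ) (h4 : |a4| < μ) (h5 : |a5| < μ)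
    (h6 : |a6| < μ) (h7 : |a7| < μ) (h8 : |a8| < μ) (h9 : |a9| < μ) (h10 : |a10| < μ)
    (h11 : |a11| < μ) (h12 : |a12| < μ) (h13 : |a13| < μ) (h14 : |a14| < μ) :
    a4 = (-a1 - μ - a1 * μ - 2 * a3 * μ - μ ^ 2) / (2 * μ) ∧ (1 + Real.sqrt 17) / 8 ≤ μ :=
  step3_general μ a1 a2 a3 a4 a5 a6 a7 a8 a9 a10 a11 a12 a13 a14 hrank hμ1 hμ2 h1 h3 h4 h6
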